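/- For odd positive integers j and 0 ≤ τ < 1, the integral I_j := ∫_0^∞ y^j erfc(√(2/(1−τ)) y) e^{y²} dy satisfies the recursion I_j = −((j−1)/2) I_{j−2} + (1/(2√π)) √(2/(1−τ)) ((1−τ)/(1+τ))^{j/2} Γ(j/2) − (1/2) δ_{j,1}. -/

import Mathlib

open MeasureTheory Set Real Filter Topology

noncomputable def erfc (x : ℝ) : ℝ :=
  (2 / Real.sqrt Real.pi) * ∫ t in Set.Ioi x, Real.exp (-t ^ 2)

noncomputable def Ij (τ : ℝ) (j : ℕ) : ℝ :=
  ∫ y in Set.Ioi (0 : ℝ), y ^ j * erfc (Real.sqrt (2 / (1 - τ)) * y) * Real.exp (y ^ 2)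

/-!
Integrate by parts against `F(y) = y^{j-1} erfc(c y) e^{y²}` with `c = √(2/(1-τ)) > 1`:
`F' = (j-1) y^{j-2} erfc(c y) e^{y²} + 2 y^j erfc(c y) e^{y²} - (2c/√π) y^{j-1} e^{-(c²-1) y²}`,
`F(0) = δ_{j,1}`, and `F → 0` at infinity because `erfc x ≤ e^{-x²}` for `x ≥ 0`. The last term
of `F'` integrates to the Gaussian moment `(c² - 1)^{-j/2} Γ(j/2) / 2`, and
`c² - 1 = (1+τ)/(1-τ)`.
-/

variable {E : Type*} [NormedAddCommGroup E] [NormedSpace ℝ E]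

lemma setIntegral_Ioi_eq_setIntegral_Ioi_zero_comp_add (f : ℝ → E) (x : ℝ) :
    ∫ t in Ioi x, f t = ∫ s in Ioi 0, f (s + x) := by
  rw [← (measurePreserving_add_right volume x).setIntegral_preimage_emb
    (measurableEmbedding_addRight x), preimage_add_const_Ioi, sub_self]

lemma hasDerivAt_integral_Ioi [CompleteSpace E] {f : ℝ → E} (hf : Integrable f) (hcont : Continuous f)
    (x : ℝ) :
    HasDerivAt (fun y ↦ ∫ t in Ioi y, f t) (-f x) x := by
  have : (fun y ↦ ∫ t in Ioi y, f t) = fun y ↦ (∫ t in Ioi 0, f t) - ∫ t in (0)..y, f t := by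
    ext y
    rw [← intervalIntegral.integral_Ioi_sub_Ioi' hf.integrableOn hf.integrableOn, sub_sub_cancel]
  rw [this]
  exact (hcont.integral_hasStrictDerivAt 0 x).hasDerivAt.const_sub _

lemma integrable_exp_neg_sq : Integrable fun t : ℝ ↦ exp (-t ^ 2) := by
  simpa using integrable_exp_neg_mul_sq one_pos

lemma integral_Ioi_zero_exp_neg_sq : ∫ t in Ioi (0 : ℝ), exp (-t ^ 2) = √π / 2 := by
  simpa using integral_gaussian_Ioi 1

lemma hasDerivAt_erfc (x : ℝ) : HasDerivAt erfc (-(2 / √π * exp (-x ^ 2))) x := by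
  rw [← mul_neg]
  exact (hasDerivAt_integral_Ioi integrable_exp_neg_sq (by fun_prop) x).const_mul (2 / √π)

@[fun_prop]
lemma continuous_erfc : Continuous erfc :=
  continuous_iff_continuousAt.mpr fun x ↦ (hasDerivAt_erfc x).continuousAt

lemma erfc_zero : erfc 0 = 1 := by
  rw [erfc, integral_Ioi_zero_exp_neg_sq]
  field_simp

lemma erfc_nonneg (x : ℝ) : 0 ≤ erfc x :=
  mul_nonneg (by positivity) (setIntegral_nonneg measurableSet_Ioi fun t _ ↦ (exp_pos _).le)

/-- `(s + x)² ≥ s² + x²` for `s, x ≥ 0`, so the Gaussian tail beyond `x` is at most `e^{-x²}`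
times the tail beyond `0`. -/
lemma erfc_le_exp_neg_sq {x : ℝ} (hx : 0 ≤ x) : erfc x ≤ exp (-x ^ 2) := by
  have htail : ∫ t in Ioi x, exp (-t ^ 2) ≤ exp (-x ^ 2) * ∫ s in Ioi (0 : ℝ), exp (-s ^ 2) := by
    rw [setIntegral_Ioi_eq_setIntegral_Ioi_zero_comp_add, ← integral_const_mul]
    refine setIntegral_mono_on (integrable_exp_neg_sq.comp_add_right x).integrableOn
      (integrable_exp_neg_sq.const_mul _).integrableOn measurableSet_Ioi fun s hs ↦ ?_
    rw [← exp_add, exp_le_exp]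
    nlinarith [mul_nonneg hs.le hx]
  rw [integral_Ioi_zero_exp_neg_sq] at htail
  calc erfc x ≤ 2 / √π * (exp (-x ^ 2) * (√π / 2)) :=
        mul_le_mul_of_nonneg_left htail (by positivity)
    _ = exp (-x ^ 2) := by field_simp

lemma integrableOn_pow_mul_exp_neg_mul_sq {b : ℝ} (hb : 0 < b) (n : ℕ) :
    IntegrableOn (fun y : ℝ ↦ y ^ n * exp (-b * y ^ 2)) (Ioi 0) := by
  simpa using
    integrableOn_rpow_mul_exp_neg_mul_sq hb (s := n) (neg_one_lt_zero.trans_le n.cast_nonneg)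

lemma integral_pow_mul_exp_neg_mul_sq {b : ℝ} (hb : 0 < b) (n : ℕ) :
    ∫ y in Ioi (0 : ℝ), y ^ n * exp (-b * y ^ 2)
      = b ^ (-((n : ℝ) + 1) / 2) / 2 * Gamma ((n + 1) / 2) := by
  have := integral_rpow_mul_exp_neg_mul_rpow two_pos (q := n)
    (neg_one_lt_zero.trans_le n.cast_nonneg) hb
  simp only [rpow_natCast, rpow_two] at this
  rw [this]
  ring

lemma tendsto_pow_mul_exp_neg_mul_sq {b : ℝ} (hb : 0 < b) (n : ℕ) :
    Tendsto (fun y : ℝ ↦ y ^ n * exp (-b * y ^ 2)) atTop (𝓝 0) := by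
  simpa using (rpow_mul_exp_neg_mul_sq_isLittleO_exp_neg hb n).tendsto_zero_of_tendsto
    (tendsto_exp_atBot.comp <| tendsto_id.const_mul_atTop_of_neg (by norm_num))

noncomputable def erfcMoment (c : ℝ) (k : ℕ) : ℝ :=
  ∫ y in Ioi 0, y ^ k * erfc (c * y) * exp (y ^ 2)

lemma continuous_pow_mul_erfc_mul_exp_sq (c : ℝ) (k : ℕ) :
    Continuous fun y : ℝ ↦ y ^ k * erfc (c * y) * exp (y ^ 2) := by
  fun_prop

lemma pow_mul_erfc_mul_exp_sq_nonneg (c : ℝ) {y : ℝ} (hy : 0 ≤ y) (k : ℕ) :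
    0 ≤ y ^ k * erfc (c * y) * exp (y ^ 2) := by
  have := erfc_nonneg (c * y)
  positivity

lemma pow_mul_erfc_mul_exp_sq_le {c y : ℝ} (hc : 0 ≤ c) (hy : 0 ≤ y) (k : ℕ) :
    y ^ k * erfc (c * y) * exp (y ^ 2) ≤ y ^ k * exp (-(c ^ 2 - 1) * y ^ 2) := by
  rw [mul_assoc, show -(c ^ 2 - 1) * y ^ 2 = -(c * y) ^ 2 + y ^ 2 by ring, exp_add]
  gcongr
  exact erfc_le_exp_neg_sq (mul_nonneg hc hy)

lemma integrableOn_pow_mul_erfc_mul_exp_sq {c : ℝ} (hc : 1 < c) (k : ℕ) :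
    IntegrableOn (fun y ↦ y ^ k * erfc (c * y) * exp (y ^ 2)) (Ioi 0) := by
  refine (integrableOn_pow_mul_exp_neg_mul_sq (b := c ^ 2 - 1) (by nlinarith) k).mono'
    (continuous_pow_mul_erfc_mul_exp_sq c k).aestronglyMeasurable ?_
  filter_upwards [ae_restrict_mem measurableSet_Ioi] with y hy
  rw [norm_of_nonneg (pow_mul_erfc_mul_exp_sq_nonneg c hy.le k)]
  exact pow_mul_erfc_mul_exp_sq_le (by positivity) hy.le k

lemma tendsto_pow_mul_erfc_mul_exp_sq {c : ℝ} (hc : 1 < c) (k : ℕ) :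
    Tendsto (fun y ↦ y ^ k * erfc (c * y) * exp (y ^ 2)) atTop (𝓝 0) :=
  squeeze_zero' ((eventually_ge_atTop 0).mono fun _ hy ↦ pow_mul_erfc_mul_exp_sq_nonneg c hy k)
    ((eventually_ge_atTop 0).mono fun _ hy ↦ pow_mul_erfc_mul_exp_sq_le (by positivity) hy k)
    (tendsto_pow_mul_exp_neg_mul_sq (by nlinarith) k)

lemma hasDerivAt_pow_mul_erfc_mul_exp_sq (c y : ℝ) (k : ℕ) :
    HasDerivAt (fun y ↦ y ^ k * erfc (c * y) * exp (y ^ 2))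
      (k * (y ^ (k - 1) * erfc (c * y) * exp (y ^ 2))
        + 2 * (y ^ (k + 1) * erfc (c * y) * exp (y ^ 2))
        - 2 * c / √π * (y ^ k * exp (-(c ^ 2 - 1) * y ^ 2))) y := by
  have herfc : HasDerivAt (fun y ↦ erfc (c * y)) (-(2 / √π * exp (-(c * y) ^ 2)) * c) y :=
    (hasDerivAt_erfc (c * y)).comp y (((hasDerivAt_id y).const_mul c).congr_deriv (mul_one c))
  have hexp : HasDerivAt (fun y ↦ exp (y ^ 2)) (exp (y ^ 2) * (2 * y)) y := by
    simpa using (hasDerivAt_pow 2 y).exp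
  refine (((hasDerivAt_pow k y).fun_mul herfc).fun_mul hexp).congr_deriv ?_
  rw [show -(c ^ 2 - 1) * y ^ 2 = -(c * y) ^ 2 + y ^ 2 by ring, exp_add, pow_succ]
  ring

lemma erfcMoment_succ {c : ℝ} (hc : 1 < c) (k : ℕ) :
    erfcMoment c (k + 1) = -(k / 2) * erfcMoment c (k - 1)
      + c / (2 * √π) * (c ^ 2 - 1) ^ (-((k : ℝ) + 1) / 2) * Gamma ((k + 1) / 2) - 0 ^ k / 2 := by
  have hb : 0 < c ^ 2 - 1 := by nlinarith
  have h₁ := (integrableOn_pow_mul_erfc_mul_exp_sq hc (k - 1)).const_mul (k : ℝ)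
  have h₂ := (integrableOn_pow_mul_erfc_mul_exp_sq hc (k + 1)).const_mul 2
  have h₃ := (integrableOn_pow_mul_exp_neg_mul_sq hb k).const_mul (2 * c / √π)
  have hFTC := integral_Ioi_of_hasDerivAt_of_tendsto'
    (fun y _ ↦ hasDerivAt_pow_mul_erfc_mul_exp_sq c y k) ((h₁.add h₂).sub h₃)
    (tendsto_pow_mul_erfc_mul_exp_sq hc k)
  rw [integral_sub (h₁.fun_add h₂) h₃, integral_add h₁ h₂, integral_const_mul, integral_const_mul,
    integral_const_mul, integral_pow_mul_exp_neg_mul_sq hb] at hFTC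
  simp only [mul_zero, erfc_zero, mul_one, ne_eq, OfNat.ofNat_ne_zero, not_false_eq_true, zero_pow,
    exp_zero, zero_sub] at hFTC
  unfold erfcMoment
  linear_combination hFTC / 2

/-- the recursion for `I_j`, `j` odd. -/
theorem Ij_recursion (τ : ℝ) (hτ0 : 0 ≤ τ) (hτ1 : τ < 1) (j : ℕ) (hj : Odd j) :
    Ij τ j = -(((j : ℝ) - 1) / 2) * Ij τ (j - 2) +
      (1 / (2 * Real.sqrt Real.pi)) * Real.sqrt (2 / (1 - τ)) *
        ((1 - τ) / (1 + τ)) ^ ((j : ℝ) / 2) * Real.Gamma ((j : ℝ) / 2) -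
      (if j = 1 then (1 : ℝ) / 2 else 0) := by
  obtain ⟨k, rfl⟩ : ∃ k, j = k + 1 := Nat.exists_eq_add_one.mpr hj.pos
  have hτ : 0 < 1 - τ := by linarith
  have hc : 1 < √(2 / (1 - τ)) := by
    rw [lt_sqrt zero_le_one, lt_div_iff₀ hτ]
    linarith
  have hc2 : √(2 / (1 - τ)) ^ 2 - 1 = (1 + τ) / (1 - τ) := by
    rw [sq_sqrt (by positivity)]
    field_simp
    ring
  have hpow : ((1 + τ) / (1 - τ)) ^ (-((k : ℝ) + 1) / 2)
      = ((1 - τ) / (1 + τ)) ^ (((k : ℝ) + 1) / 2) := by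
    rw [neg_div, rpow_neg (by positivity), ← inv_rpow (by positivity), inv_div]
  have hdelta : (0 : ℝ) ^ k / 2 = if k + 1 = 1 then 1 / 2 else 0 := by
    cases k <;> simp
  show erfcMoment _ (k + 1) = _ * erfcMoment _ (k + 1 - 2) + _ - _
  rw [erfcMoment_succ hc, hc2, hpow, hdelta, show k + 1 - 2 = k - 1 by omega]
  push_cast
  ring
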